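/- For every ι > 0 one has ψ(ι) > 0, and the crawl frequency function f defined by f(ι) = 1/ψ(ι) is strictly monotonically decreasing on (0, ∞). -/

import Mathlib

/-!
Writing `R_i(x) = 1 - e^{-x} ∑_{j ≤ i} x^j / j!` (the tail `P(Poisson(x) > i)`), the sum telescopes
under differentiation to `R_i'(x) = x^i e^{-x} / i!`, so `R_i` vanishes at `0` and is strictly
increasing on `[0, ∞)`. For `i ≤ ⌊ι/β⌋` the argument `γ(ι - iβ)` is nonnegative, so `ψ(ι)` is a sum
of nonnegative terms whose `i = 0` term is positive. Increasing `ι` strictly increases every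
existing term and can only add further nonnegative ones, so `ψ` is strictly increasing and
`1/ψ` strictly decreasing.
-/

open Real Finset

/-- Normalized residual of the `i`-th Taylor approximation of the exponential:
`R_i(x) = (exp x − ∑_{j=0}^{i} x^j/j!) / exp x`. -/
noncomputable def Rres (i : ℕ) (x : ℝ) : ℝ :=
  (Real.exp x - ∑ j ∈ Finset.range (i + 1), x ^ j / (Nat.factorial j : ℝ)) / Real.exp x

/-- Expected crawl-interval length `ψ(ι) = ∑_{i=0}^{⌊ι/β⌋} (1/γ)·R_i(γ(ι − iβ))`. -/
noncomputable def psi (γ β : ℝ) (ι : ℝ) : ℝ :=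
  ∑ i ∈ Finset.range (⌊ι / β⌋₊ + 1), (1 / γ) * Rres i (γ * (ι - (i : ℝ) * β))

theorem hasDerivAt_sum_range_succ_pow_div_factorial (n : ℕ) (x : ℝ) :
    HasDerivAt (fun y : ℝ => ∑ j ∈ range (n + 1), y ^ j / (j.factorial : ℝ))
      (∑ j ∈ range n, x ^ j / (j.factorial : ℝ)) x := by
  induction n with
  | zero => simpa using hasDerivAt_const x (1 : ℝ)
  | succ n ih =>
    have hterm : HasDerivAt (fun y : ℝ => y ^ (n + 1) / ((n + 1).factorial : ℝ))
        (x ^ n / (n.factorial : ℝ)) x := by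
      refine ((hasDerivAt_pow (n + 1) x).div_const ((n + 1).factorial : ℝ)).congr_deriv ?_
      rw [Nat.factorial_succ, Nat.add_sub_cancel]
      push_cast
      field_simp
    simpa only [sum_range_succ _ (n + 1), sum_range_succ _ n] using ih.fun_add hterm

theorem Rres_eq_one_sub_mul_exp_neg (i : ℕ) (x : ℝ) :
    Rres i x = 1 - (∑ j ∈ range (i + 1), x ^ j / (j.factorial : ℝ)) * exp (-x) := by
  rw [Rres, exp_neg]
  field_simp

theorem Rres_apply_zero (i : ℕ) : Rres i 0 = 0 := by
  simp [Rres, sum_range_succ']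

theorem hasDerivAt_Rres (i : ℕ) (x : ℝ) :
    HasDerivAt (Rres i) (x ^ i / (i.factorial : ℝ) * exp (-x)) x := by
  have hexp : HasDerivAt (fun y : ℝ => exp (-y)) (-exp (-x)) x := by
    simpa using (hasDerivAt_neg x).exp
  have h := ((hasDerivAt_sum_range_succ_pow_div_factorial i x).fun_mul hexp).const_sub 1
  rw [show Rres i = _ from funext (Rres_eq_one_sub_mul_exp_neg i)]
  refine h.congr_deriv ?_
  rw [sum_range_succ]
  ring

theorem Rres_strictMonoOn (i : ℕ) : StrictMonoOn (Rres i) (Set.Ici 0) := by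
  refine strictMonoOn_of_deriv_pos (convex_Ici 0)
    (fun x _ => (hasDerivAt_Rres i x).continuousAt.continuousWithinAt) fun x hx => ?_
  rw [interior_Ici] at hx
  have hx : 0 < x := hx
  rw [(hasDerivAt_Rres i x).deriv]
  positivity

theorem Rres_pos (i : ℕ) {x : ℝ} (hx : 0 < x) : 0 < Rres i x :=
  Rres_apply_zero i ▸ Rres_strictMonoOn i Set.self_mem_Ici hx.le hx

theorem Rres_nonneg (i : ℕ) {x : ℝ} (hx : 0 ≤ x) : 0 ≤ Rres i x := by
  rcases hx.eq_or_lt with rfl | hx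
  · exact (Rres_apply_zero i).ge
  · exact (Rres_pos i hx).le

theorem sub_nat_mul_nonneg_of_le_floor_div {β ι : ℝ} (hβ : 0 < β) (hι : 0 ≤ ι) {i : ℕ}
    (hi : i ≤ ⌊ι / β⌋₊) : 0 ≤ ι - i * β := by
  rw [Nat.le_floor_iff (div_nonneg hι hβ.le), le_div_iff₀ hβ] at hi
  linarith

theorem one_div_mul_Rres_nonneg {γ β ι : ℝ} (hγ : 0 < γ) (hβ : 0 < β) (hι : 0 ≤ ι) {i : ℕ}
    (hi : i ≤ ⌊ι / β⌋₊) : 0 ≤ 1 / γ * Rres i (γ * (ι - i * β)) :=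
  mul_nonneg (by positivity)
    (Rres_nonneg i (mul_nonneg hγ.le (sub_nat_mul_nonneg_of_le_floor_div hβ hι hi)))

theorem psi_pos {γ β ι : ℝ} (hγ : 0 < γ) (hβ : 0 < β) (hι : 0 < ι) : 0 < psi γ β ι := by
  have hfirst : 0 < 1 / γ * Rres 0 (γ * (ι - (0 : ℕ) * β)) :=
    mul_pos (by positivity) (Rres_pos 0 (by simpa using mul_pos hγ hι))
  refine sum_pos' (fun i hi => ?_) ⟨0, by simp, hfirst⟩
  exact one_div_mul_Rres_nonneg hγ hβ hι.le (Nat.lt_succ_iff.1 (mem_range.1 hi))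

theorem psi_strictMonoOn {γ β : ℝ} (hγ : 0 < γ) (hβ : 0 < β) :
    StrictMonoOn (psi γ β) (Set.Ioi 0) := by
  intro a (ha : 0 < a) b (hb : 0 < b) hab
  have hfloor : ⌊a / β⌋₊ ≤ ⌊b / β⌋₊ := Nat.floor_mono (by gcongr)
  calc psi γ β a < ∑ i ∈ range (⌊a / β⌋₊ + 1), 1 / γ * Rres i (γ * (b - i * β)) := by
        refine sum_lt_sum_of_nonempty nonempty_range_add_one fun i hi => ?_
        have hia := sub_nat_mul_nonneg_of_le_floor_div hβ ha.le (Nat.lt_succ_iff.1 (mem_range.1 hi))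
        have hlt : γ * (a - i * β) < γ * (b - i * β) := by gcongr
        have hnonneg : 0 ≤ γ * (a - i * β) := by positivity
        gcongr
        exact Rres_strictMonoOn i hnonneg (hnonneg.trans hlt.le) hlt
    _ ≤ psi γ β b := by
        refine sum_le_sum_of_subset_of_nonneg (range_subset_range.2 (by omega)) fun i hi _ => ?_
        exact one_div_mul_Rres_nonneg hγ hβ hb.le (Nat.lt_succ_iff.1 (mem_range.1 hi))

/-- For every `ι > 0`, `ψ(ι) > 0`, and the crawl frequency function `f(ι) = 1/ψ(ι)` is
strictly monotonically decreasing on `(0, ∞)`. -/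
theorem stmt_6 (γ β : ℝ) (hγ : 0 < γ) (hβ : 0 < β) :
    (∀ ι : ℝ, 0 < ι → 0 < psi γ β ι) ∧
    StrictAntiOn (fun ι => 1 / psi γ β ι) (Set.Ioi (0 : ℝ)) :=
  ⟨fun _ hι => psi_pos hγ hβ hι, fun _ ha _ _ hab =>
    one_div_lt_one_div_of_lt (psi_pos hγ hβ ha) (psi_strictMonoOn hγ hβ ha ‹_› hab)⟩
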